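/- arXiv:hep-th/9505091 — 2 statements merged into one kernel-verified Lean document; each statement's English description precedes it below -/
import Mathlib

section
/- The Toda exchange r-matrices are (constant spectral parameter) solutions of the generalized classical Yang–Baxter equation: for each choice of sign, setting r_{12} = r_{13} = r_{23} equal to r^±(x) placed in the corresponding pair of factors of (ℂ^N)^{⊗3}, one has, for every x ∈ ℂ^N with x_{ij} ∉ iπℤ (i≠j), [r_{12},r_{13}] + [r_{12},r_{23}] + [r_{13},r_{23}] − Σ_{ν=1}^N (e_{νν}⊗Id⊗Id)·∂_{x_ν} r_{23} + Σ_{ν=1}^N (Id⊗e_{νν}⊗Id)·∂_{x_ν} r_{13} − Σ_{ν=1}^N (Id⊗Id⊗e_{νν})·∂_{x_ν} r_{12} = 0. -/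
/- STATEMENT 6: The Toda exchange r-matrices r^±(x) are (constant spectral
   parameter) solutions of the generalized classical Yang–Baxter equation. -/

noncomputable section
open Matrix Complex
open scoped Kronecker BigOperators

def coth (z : ℂ) : ℂ := Complex.cosh z / Complex.sinh z

def inPiZ (z : ℂ) : Prop := ∃ n : ℤ, z = (n : ℂ) * (Real.pi : ℂ) * Complex.I

variable (N : ℕ)

def E (i j : Fin N) : Matrix (Fin N) (Fin N) ℂ := Matrix.single i j 1

def flipP : Matrix (Fin N × Fin N) (Fin N × Fin N) ℂ :=
  ∑ i : Fin N, ∑ j : Fin N, E N i j ⊗ₖ E N j i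

/-- the Toda exchange r-matrices r^±(x), ε = ±1 encoding the sign -/
def rToda (ε : ℂ) (x : Fin N → ℂ) : Matrix (Fin N × Fin N) (Fin N × Fin N) ℂ :=
  ε • flipP N -
    ∑ i : Fin N, ∑ j : Fin N,
      if i ≠ j then coth (x i - x j) • (E N i j ⊗ₖ E N j i) else 0

def pl12 (A : Matrix (Fin N × Fin N) (Fin N × Fin N) ℂ) :
    Matrix (Fin N × Fin N × Fin N) (Fin N × Fin N × Fin N) ℂ :=
  fun p q => A (p.1, p.2.1) (q.1, q.2.1) * (if p.2.2 = q.2.2 then 1 else 0)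

def pl13 (A : Matrix (Fin N × Fin N) (Fin N × Fin N) ℂ) :
    Matrix (Fin N × Fin N × Fin N) (Fin N × Fin N × Fin N) ℂ :=
  fun p q => A (p.1, p.2.2) (q.1, q.2.2) * (if p.2.1 = q.2.1 then 1 else 0)

def pl23 (A : Matrix (Fin N × Fin N) (Fin N × Fin N) ℂ) :
    Matrix (Fin N × Fin N × Fin N) (Fin N × Fin N × Fin N) ℂ :=
  fun p q => A (p.2.1, p.2.2) (q.2.1, q.2.2) * (if p.1 = q.1 then 1 else 0)

def pl1 (h : Matrix (Fin N) (Fin N) ℂ) :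
    Matrix (Fin N × Fin N × Fin N) (Fin N × Fin N × Fin N) ℂ :=
  fun p q => h p.1 q.1 * (if p.2.1 = q.2.1 then 1 else 0) * (if p.2.2 = q.2.2 then 1 else 0)

def pl2 (h : Matrix (Fin N) (Fin N) ℂ) :
    Matrix (Fin N × Fin N × Fin N) (Fin N × Fin N × Fin N) ℂ :=
  fun p q => h p.2.1 q.2.1 * (if p.1 = q.1 then 1 else 0) * (if p.2.2 = q.2.2 then 1 else 0)

def pl3 (h : Matrix (Fin N) (Fin N) ℂ) :
    Matrix (Fin N × Fin N × Fin N) (Fin N × Fin N × Fin N) ℂ :=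
  fun p q => h p.2.2 q.2.2 * (if p.1 = q.1 then 1 else 0) * (if p.2.1 = q.2.1 then 1 else 0)

def pderivMat {α : Type} (ν : Fin N)
    (f : (Fin N → ℂ) → Matrix α α ℂ) (x : Fin N → ℂ) : Matrix α α ℂ :=
  fun p q => deriv (fun t : ℂ => f (Function.update x ν t) p q) (x ν)

def mcomm {α : Type} [Fintype α] [DecidableEq α] (A B : Matrix α α ℂ) : Matrix α α ℂ :=
  A * B - B * A


/-!
Both `r^±(x)` are monomial matrices, `Σ_{a,b} (ε - φ_{ab}) e_{ab} ⊗ e_{ba}` with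
`φ_{ab} = coth (x_a - x_b)` off the diagonal and `φ_{aa} = 0`. Placed in `(ℂ^N)^{⊗3}` they
remain monomial, and row `(a,b,c)` of each term of the equation has its only nonzero entry in
a column that permutes `(a,b,c)`: a 3-cycle for the commutator terms, a transposition for the
derivative terms. For pairwise distinct `a, b, c` the coefficients of the two 3-cycles are
`±((ε² - 1) + (φ_{ab} φ_{bc} + 1 - φ_{ac} (φ_{ab} + φ_{bc})))`, which vanishes by `ε² = 1` and the
addition formula for `coth`, while the derivative terms vanish. When two of `a, b, c` agree, a
transposition coincides with a 3-cycle and the cancellation uses `coth' = 1 - coth²`.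
-/

theorem sinh_ne_zero_of_not_inPiZ {z : ℂ} (h : ¬ inPiZ z) : Complex.sinh z ≠ 0 := by
  intro h0
  apply h
  have hs : Complex.sin (z * Complex.I) = 0 := by
    rw [Complex.sin_mul_I, h0, zero_mul]
  obtain ⟨k, hk⟩ := Complex.sin_eq_zero_iff.mp hs
  exact ⟨-k, by push_cast; linear_combination (-Complex.I) * hk + z * Complex.I_sq⟩

theorem coth_neg (z : ℂ) : coth (-z) = -coth z := by
  simp only [coth, Complex.sinh_neg, Complex.cosh_neg, div_neg]

theorem hasDerivAt_coth {z : ℂ} (h : Complex.sinh z ≠ 0) :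
    HasDerivAt coth (1 - coth z ^ 2) z := by
  have hquot : HasDerivAt coth ((sinh z * sinh z - cosh z * cosh z) / sinh z ^ 2) z :=
    (Complex.hasDerivAt_cosh z).div (Complex.hasDerivAt_sinh z) h
  convert hquot using 1
  unfold coth
  field_simp

theorem coth_mul_coth_add_one {u v : ℂ} (hu : Complex.sinh u ≠ 0) (hv : Complex.sinh v ≠ 0)
    (huv : Complex.sinh (u + v) ≠ 0) :
    coth u * coth v + 1 = coth (u + v) * (coth u + coth v) := by
  unfold coth
  rw [Complex.sinh_add, Complex.cosh_add] at *
  field_simp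
  ring

theorem hasDerivAt_update_apply {ι : Type*} [DecidableEq ι] (x : ι → ℂ) (ν a : ι) (t : ℂ) :
    HasDerivAt (fun s => Function.update x ν s a) (if a = ν then 1 else 0) t := by
  rcases eq_or_ne a ν with rfl | haν
  · simp only [Function.update_self, if_true]
    exact hasDerivAt_id' t
  · simp only [Function.update_of_ne haν, if_neg haν]
    exact hasDerivAt_const t (x a)

def cothOffDiag {ι : Type*} [DecidableEq ι] (x : ι → ℂ) (a b : ι) : ℂ :=
  if a = b then 0 else coth (x a - x b)

section CothOffDiag

variable {ι : Type*} [DecidableEq ι] (x : ι → ℂ)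

theorem cothOffDiag_swap (a b : ι) : cothOffDiag x b a = -cothOffDiag x a b := by
  unfold cothOffDiag
  rcases eq_or_ne a b with rfl | hab
  · simp
  · rw [if_neg hab.symm, if_neg hab, ← neg_sub, coth_neg]

theorem cothOffDiag_mul_add_one (hx : ∀ i j : ι, i ≠ j → ¬ inPiZ (x i - x j)) {a b c : ι}
    (hab : a ≠ b) (hbc : b ≠ c) (hac : a ≠ c) :
    cothOffDiag x a b * cothOffDiag x b c + 1 =
      cothOffDiag x a c * (cothOffDiag x a b + cothOffDiag x b c) := by
  have hsum : x a - x b + (x b - x c) = x a - x c := by ring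
  simp only [cothOffDiag, if_neg hab, if_neg hbc, if_neg hac]
  have := coth_mul_coth_add_one (sinh_ne_zero_of_not_inPiZ (hx a b hab))
    (sinh_ne_zero_of_not_inPiZ (hx b c hbc)) (hsum ▸ sinh_ne_zero_of_not_inPiZ (hx a c hac))
  rwa [hsum] at this

theorem hasDerivAt_cothOffDiag_update (hx : ∀ i j : ι, i ≠ j → ¬ inPiZ (x i - x j))
    (ν a b : ι) :
    HasDerivAt (fun t => cothOffDiag (Function.update x ν t) a b)
      (((if a = ν then 1 else 0) - (if b = ν then 1 else 0)) * (1 - cothOffDiag x a b ^ 2))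
      (x ν) := by
  rcases eq_or_ne a b with rfl | hab
  · simpa [cothOffDiag] using hasDerivAt_const (x ν) (0 : ℂ)
  have hdiff := (hasDerivAt_update_apply x ν a (x ν)).sub (hasDerivAt_update_apply x ν b (x ν))
  have hcoth := hasDerivAt_coth (sinh_ne_zero_of_not_inPiZ (hx a b hab))
  simp only [cothOffDiag, if_neg hab]
  exact (hcoth.comp_of_eq (x ν) hdiff (by rw [Pi.sub_apply, Function.update_eq_self])).congr_deriv
    (mul_comm _ _)

end CothOffDiag

section MonomialMatrix

variable {α R : Type*} [DecidableEq α]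

def monomialMatrix [Zero R] (σ : α → α) (w : α → R) : Matrix α α R :=
  fun p q => if q = σ p then w p else 0

theorem monomialMatrix_mul [Fintype α] [NonUnitalNonAssocSemiring R] (σ τ : α → α)
    (w v : α → R) :
    monomialMatrix σ w * monomialMatrix τ v =
      monomialMatrix (τ ∘ σ) (fun p => w p * v (σ p)) := by
  ext p q
  simp only [monomialMatrix, Matrix.mul_apply, ite_mul, zero_mul, Finset.sum_ite_eq',
    Finset.mem_univ, if_true]
  simp only [Function.comp_apply, mul_ite, mul_zero]

theorem sum_monomialMatrix [AddCommMonoid R] {ι : Type*} (s : Finset ι) (σ : α → α)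
    (w : ι → α → R) :
    ∑ i ∈ s, monomialMatrix σ (w i) = monomialMatrix σ (fun p => ∑ i ∈ s, w i p) := by
  ext p q
  simp [monomialMatrix, Matrix.sum_apply, Finset.sum_ite_irrel]

end MonomialMatrix

theorem pl12_monomialMatrix_swap (w : Fin N × Fin N → ℂ) :
    pl12 N (monomialMatrix Prod.swap w) =
      monomialMatrix (fun p => (p.2.1, p.1, p.2.2)) (fun p => w (p.1, p.2.1)) := by
  ext ⟨a, b, c⟩ ⟨d, e, f⟩
  simp only [pl12, monomialMatrix, Prod.swap_prod_mk, Prod.mk.injEq]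
  split_ifs <;> grind

theorem pl13_monomialMatrix_swap (w : Fin N × Fin N → ℂ) :
    pl13 N (monomialMatrix Prod.swap w) =
      monomialMatrix (fun p => (p.2.2, p.2.1, p.1)) (fun p => w (p.1, p.2.2)) := by
  ext ⟨a, b, c⟩ ⟨d, e, f⟩
  simp only [pl13, monomialMatrix, Prod.swap_prod_mk, Prod.mk.injEq]
  split_ifs <;> grind

theorem pl23_monomialMatrix_swap (w : Fin N × Fin N → ℂ) :
    pl23 N (monomialMatrix Prod.swap w) =
      monomialMatrix (fun p => (p.1, p.2.2, p.2.1)) (fun p => w (p.2.1, p.2.2)) := by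
  ext ⟨a, b, c⟩ ⟨d, e, f⟩
  simp only [pl23, monomialMatrix, Prod.swap_prod_mk, Prod.mk.injEq]
  split_ifs <;> grind

theorem pl1_E_self (ν : Fin N) :
    pl1 N (E N ν ν) = monomialMatrix id (fun p => if p.1 = ν then 1 else 0) := by
  ext ⟨a, b, c⟩ ⟨d, e, f⟩
  simp only [pl1, E, Matrix.single_apply, monomialMatrix, id, Prod.mk.injEq]
  split_ifs <;> grind

theorem pl2_E_self (ν : Fin N) :
    pl2 N (E N ν ν) = monomialMatrix id (fun p => if p.2.1 = ν then 1 else 0) := by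
  ext ⟨a, b, c⟩ ⟨d, e, f⟩
  simp only [pl2, E, Matrix.single_apply, monomialMatrix, id, Prod.mk.injEq]
  split_ifs <;> grind

theorem pl3_E_self (ν : Fin N) :
    pl3 N (E N ν ν) = monomialMatrix id (fun p => if p.2.2 = ν then 1 else 0) := by
  ext ⟨a, b, c⟩ ⟨d, e, f⟩
  simp only [pl3, E, Matrix.single_apply, monomialMatrix, id, Prod.mk.injEq]
  split_ifs <;> grind

theorem pderivMat_monomialMatrix {α : Type} [DecidableEq α] (ν : Fin N) (σ : α → α)
    (w : (Fin N → ℂ) → α → ℂ) (x : Fin N → ℂ) :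
    pderivMat N ν (fun y => monomialMatrix σ (w y)) x =
      monomialMatrix σ (fun p => deriv (fun t => w (Function.update x ν t) p) (x ν)) := by
  ext p q
  simp only [pderivMat, monomialMatrix]
  split_ifs <;> simp

theorem sum_smul_E_kronecker_E (w : Fin N × Fin N → ℂ) :
    ∑ i, ∑ j, w (i, j) • (E N i j ⊗ₖ E N j i) = monomialMatrix Prod.swap w := by
  ext ⟨a, b⟩ ⟨c, d⟩
  simp [E, Matrix.sum_apply, Matrix.single_apply, monomialMatrix, ite_and, Finset.sum_ite_eq']
  grind

theorem rToda_eq_monomialMatrix (ε : ℂ) (x : Fin N → ℂ) :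
    rToda N ε x = monomialMatrix Prod.swap (fun p => ε - cothOffDiag x p.1 p.2) := by
  rw [← sum_smul_E_kronecker_E, rToda, flipP, Finset.smul_sum, ← Finset.sum_sub_distrib]
  refine Finset.sum_congr rfl fun i _ => ?_
  rw [Finset.smul_sum, ← Finset.sum_sub_distrib]
  refine Finset.sum_congr rfl fun j _ => ?_
  by_cases hij : i = j <;> simp [cothOffDiag, hij, sub_smul]

theorem pderivMat_rToda (ε : ℂ) (x : Fin N → ℂ) (hx : ∀ i j : Fin N, i ≠ j → ¬ inPiZ (x i - x j))
    (ν : Fin N) :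
    pderivMat N ν (rToda N ε) x = monomialMatrix Prod.swap (fun p =>
      -(((if p.1 = ν then 1 else 0) - (if p.2 = ν then 1 else 0)) *
        (1 - cothOffDiag x p.1 p.2 ^ 2))) := by
  rw [funext (rToda_eq_monomialMatrix N ε), pderivMat_monomialMatrix]
  congr 1
  funext p
  exact ((hasDerivAt_cothOffDiag_update x hx ν p.1 p.2).const_sub ε).deriv

theorem sum_pl1_E_mul_pl23 (g : Fin N → Fin N × Fin N → ℂ) :
    ∑ ν, pl1 N (E N ν ν) * pl23 N (monomialMatrix Prod.swap (g ν)) =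
      monomialMatrix (fun p => (p.1, p.2.2, p.2.1)) (fun p => g p.1 (p.2.1, p.2.2)) := by
  simp only [pl1_E_self, pl23_monomialMatrix_swap, monomialMatrix_mul, sum_monomialMatrix]
  simp

theorem sum_pl2_E_mul_pl13 (g : Fin N → Fin N × Fin N → ℂ) :
    ∑ ν, pl2 N (E N ν ν) * pl13 N (monomialMatrix Prod.swap (g ν)) =
      monomialMatrix (fun p => (p.2.2, p.2.1, p.1)) (fun p => g p.2.1 (p.1, p.2.2)) := by
  simp only [pl2_E_self, pl13_monomialMatrix_swap, monomialMatrix_mul, sum_monomialMatrix]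
  simp

theorem sum_pl3_E_mul_pl12 (g : Fin N → Fin N × Fin N → ℂ) :
    ∑ ν, pl3 N (E N ν ν) * pl12 N (monomialMatrix Prod.swap (g ν)) =
      monomialMatrix (fun p => (p.2.1, p.1, p.2.2)) (fun p => g p.2.2 (p.1, p.2.1)) := by
  simp only [pl3_E_self, pl12_monomialMatrix_swap, monomialMatrix_mul, sum_monomialMatrix]
  simp

/-- The entry at row `(a, b, c)` and column `q` of the equation for weights `ε - φ a b`. -/
theorem cybe_entry_eq_zero {ι : Type*} [DecidableEq ι] {ε : ℂ} (hε : ε ^ 2 = 1) {φ : ι → ι → ℂ}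
    (hanti : ∀ a b, φ b a = -φ a b)
    (hadd : ∀ {a b c}, a ≠ b → b ≠ c → a ≠ c → φ a b * φ b c + 1 = φ a c * (φ a b + φ b c))
    (a b c : ι) (q : ι × ι × ι) :
    (if q = (c, a, b) then (ε - φ a b) * (ε - φ b c) else 0) -
        (if q = (b, c, a) then (ε - φ a c) * (ε - φ c b) else 0) +
      ((if q = (b, c, a) then (ε - φ a b) * (ε - φ a c) else 0) -
        (if q = (c, a, b) then (ε - φ b c) * (ε - φ a c) else 0)) +
      ((if q = (c, a, b) then (ε - φ a c) * (ε - φ b a) else 0) -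
        (if q = (b, c, a) then (ε - φ b c) * (ε - φ a b) else 0)) -
      (if q = (a, c, b) then
        -(((if b = a then 1 else 0) - if c = a then 1 else 0) * (1 - φ b c ^ 2)) else 0) +
      (if q = (c, b, a) then
        -(((if a = b then 1 else 0) - if c = b then 1 else 0) * (1 - φ a c ^ 2)) else 0) -
      (if q = (b, a, c) then
        -(((if a = c then 1 else 0) - if b = c then 1 else 0) * (1 - φ a b ^ 2)) else 0) =
    0 := by
  have hself : ∀ a, φ a a = 0 := fun a => by linear_combination (hanti a a) / 2
  rcases eq_or_ne a b with rfl | hab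
  · rcases eq_or_ne a c with rfl | hac
    · simp only [hself]
      split_ifs <;> ring
    · split_ifs <;> grind
  · rcases eq_or_ne b c with rfl | hbc
    · split_ifs <;> grind
    · rcases eq_or_ne a c with rfl | hac
      · split_ifs <;> grind
      · have := hadd hab hbc hac
        split_ifs <;> grind

theorem rToda_generalized_CYBE (ε : ℂ) (hε : ε = 1 ∨ ε = -1)
    (x : Fin N → ℂ) (hx : ∀ i j : Fin N, i ≠ j → ¬ inPiZ (x i - x j)) :
    mcomm (pl12 N (rToda N ε x)) (pl13 N (rToda N ε x)) +
    mcomm (pl12 N (rToda N ε x)) (pl23 N (rToda N ε x)) +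
    mcomm (pl13 N (rToda N ε x)) (pl23 N (rToda N ε x)) -
    (∑ ν : Fin N, pl1 N (E N ν ν) * pl23 N (pderivMat N ν (rToda N ε) x)) +
    (∑ ν : Fin N, pl2 N (E N ν ν) * pl13 N (pderivMat N ν (rToda N ε) x)) -
    (∑ ν : Fin N, pl3 N (E N ν ν) * pl12 N (pderivMat N ν (rToda N ε) x)) = 0 := by
  have hε2 : ε ^ 2 = 1 := by rcases hε with rfl | rfl <;> norm_num
  simp only [pderivMat_rToda N ε x hx, sum_pl1_E_mul_pl23, sum_pl2_E_mul_pl13, sum_pl3_E_mul_pl12]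
  simp only [mcomm, rToda_eq_monomialMatrix, pl12_monomialMatrix_swap, pl13_monomialMatrix_swap,
    pl23_monomialMatrix_swap, monomialMatrix_mul]
  ext ⟨a, b, c⟩ q
  simp only [Matrix.add_apply, Matrix.sub_apply, Matrix.zero_apply, monomialMatrix,
    Function.comp_apply]
  exact cybe_entry_eq_zero hε2 (cothOffDiag_swap x) (cothOffDiag_mul_add_one x hx) a b c q
end
end

section
/- Gauge freedom for the Gervais–Neveu–Felder equation: let γ ∈ ℂ and let R(λ,μ,x) be an End(ℂ^N⊗ℂ^N)-valued function on Λ×Λ×ℂ^N satisfying (a) [h⊗Id + Id⊗h, R(λ,μ,x)] = 0 for every diagonal N×N matrix h, and (b) the two-parameter Gervais–Neveu–Felder equation R_{12}(λ_1,λ_2, x+γh^{(3)}) R_{13}(λ_1,λ_3, x−γh^{(2)}) R_{23}(λ_2,λ_3, x+γh^{(1)}) = R_{23}(λ_2,λ_3, x−γh^{(1)}) R_{13}(λ_1,λ_3, x+γh^{(2)}) R_{12}(λ_1,λ_2, x−γh^{(3)}) for all λ_1,λ_2,λ_3 ∈ Λ and x ∈ ℂ^N. Then for every function α: Λ→ℂ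 and every β ∈ ℂ, the matrix R̃(λ,μ,x) := (e^{[α(λ)+β]X(x)}⊗e^{[α(μ)−β]X(x)}) · e^{γ[α(λ)−α(μ)−β]C} · R(λ,μ,x) · e^{γ[α(λ)−α(μ)+β]C} · (e^{−[α(λ)−β]X(x)}⊗e^{−[α(μ)+β]X(x)}) also satisfies the two-parameter Gervais–Neveu–Felder equation, where X(x) := diag(x_1,…,x_N) − ((x_1+…+x_N)/N)·Id and C := Σ_{i=1}^N e_{ii}⊗e_{ii} − (1/N) Id⊗Id. -/
/-! All gauge factors are diagonal, so `R̃_{pq} = e^{φ(p)} R_{pq} e^{ψ(q)}`, and the Cartan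
invariance (a) forces `R_{pq} = 0` unless `q` is `p` or `p` with its two factors swapped. A term of
either side of the GNF equation is a product along a path `p → r → t → q` whose steps fix or swap
two tensor factors, so it picks up the scalar `e^{φ₁(p) + (ψ₁ + φ₂)(r) + (ψ₂ + φ₃)(t) + ψ₃(q)}`.
On each of the eight paths of either side this exponent is `F(p) + G(q)` for one and the same pair
`F, G`; hence both sides of the GNF equation for `R̃` are those for `R`, conjugated by the same
diagonal matrices. -/

noncomputable section
open Matrix Complex
open scoped Kronecker BigOperators

variable (N : ℕ)

/-- the vector-representation weight w_k = δ_k − (1/N)(1,…,1) ∈ ℂ^N -/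
def wt (k : Fin N) : Fin N → ℂ :=
  (Pi.single k 1 : Fin N → ℂ) - fun _ => ((N : ℂ))⁻¹

/-- S placed in factors 1,2 of (ℂ^N)^{⊗3}, argument shifted by s·h^{(3)}
    (acting as S(x + s·w_k) on index k in factor 3) -/
def sh12 (S : (Fin N → ℂ) → Matrix (Fin N × Fin N) (Fin N × Fin N) ℂ)
    (x : Fin N → ℂ) (s : ℂ) :
    Matrix (Fin N × Fin N × Fin N) (Fin N × Fin N × Fin N) ℂ :=
  fun p q => if p.2.2 = q.2.2 then S (x + s • wt N q.2.2) (p.1, p.2.1) (q.1, q.2.1) else 0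

def sh13 (S : (Fin N → ℂ) → Matrix (Fin N × Fin N) (Fin N × Fin N) ℂ)
    (x : Fin N → ℂ) (s : ℂ) :
    Matrix (Fin N × Fin N × Fin N) (Fin N × Fin N × Fin N) ℂ :=
  fun p q => if p.2.1 = q.2.1 then S (x + s • wt N q.2.1) (p.1, p.2.2) (q.1, q.2.2) else 0

def sh23 (S : (Fin N → ℂ) → Matrix (Fin N × Fin N) (Fin N × Fin N) ℂ)
    (x : Fin N → ℂ) (s : ℂ) :
    Matrix (Fin N × Fin N × Fin N) (Fin N × Fin N × Fin N) ℂ :=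
  fun p q => if p.1 = q.1 then S (x + s • wt N q.1) (p.2.1, p.2.2) (q.2.1, q.2.2) else 0

/-- the two-parameter Gervais–Neveu–Felder equation for R at (λ₁,λ₂,λ₃,x),
    with dynamical shift parameter γ -/
def GNF (γ : ℂ) (R : ℂ → ℂ → (Fin N → ℂ) → Matrix (Fin N × Fin N) (Fin N × Fin N) ℂ)
    (lam₁ lam₂ lam₃ : ℂ) (x : Fin N → ℂ) : Prop :=
  sh12 N (R lam₁ lam₂) x γ * sh13 N (R lam₁ lam₃) x (-γ) * sh23 N (R lam₂ lam₃) x γ =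
  sh23 N (R lam₂ lam₃) x (-γ) * sh13 N (R lam₁ lam₃) x γ * sh12 N (R lam₁ lam₂) x (-γ)

/-- X(x) = diag(x₁,…,x_N) − ((x₁+…+x_N)/N)·Id -/
def Xmat (x : Fin N → ℂ) : Matrix (Fin N) (Fin N) ℂ :=
  Matrix.diagonal x - ((∑ i : Fin N, x i) / (N : ℂ)) • (1 : Matrix (Fin N) (Fin N) ℂ)

/-- C = Σ_i e_{ii}⊗e_{ii} − (1/N) Id⊗Id -/
def Cmat : Matrix (Fin N × Fin N) (Fin N × Fin N) ℂ :=
  (∑ i : Fin N, E N i i ⊗ₖ E N i i) -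
    ((N : ℂ))⁻¹ • (1 : Matrix (Fin N × Fin N) (Fin N × Fin N) ℂ)

/-- the gauge-transformed R-matrix R̃ -/
def RGauge (γ : ℂ) (α : ℂ → ℂ) (β : ℂ)
    (R : ℂ → ℂ → (Fin N → ℂ) → Matrix (Fin N × Fin N) (Fin N × Fin N) ℂ)
    (lam mu : ℂ) (x : Fin N → ℂ) : Matrix (Fin N × Fin N) (Fin N × Fin N) ℂ :=
  (NormedSpace.exp ((α lam + β) • Xmat N x) ⊗ₖ NormedSpace.exp ((α mu - β) • Xmat N x)) *
  NormedSpace.exp ((γ * (α lam - α mu - β)) • Cmat N) *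
  R lam mu x *
  NormedSpace.exp ((γ * (α lam - α mu + β)) • Cmat N) *
  (NormedSpace.exp (-(α lam - β) • Xmat N x) ⊗ₖ NormedSpace.exp (-(α mu + β) • Xmat N x))

def centered (x : Fin N → ℂ) (i : Fin N) : ℂ := x i - (∑ j, x j) / N

-- `wtPair i j = ⟨w i, w j⟩` for the standard bilinear form on `ℂ^N`, as `centered x i = ⟨x, w i⟩`;
-- they are the diagonal entries of `Cmat` and `Xmat x`.
def wtPair (i j : Fin N) : ℂ := (if i = j then 1 else 0) - (N : ℂ)⁻¹

lemma wtPair_comm (i j : Fin N) : wtPair N i j = wtPair N j i := by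
  simp only [wtPair, eq_comm]

lemma centered_add_smul_wt (x : Fin N → ℂ) (s : ℂ) (k i : Fin N) :
    centered N (x + s • wt N k) i = centered N x i + s * wtPair N i k := by
  have hN : (N : ℂ) ≠ 0 := Nat.cast_ne_zero.2 k.pos.ne'
  have hsum : ∑ j, wt N k j = 0 := by
    simp [wt, Finset.sum_sub_distrib, mul_inv_cancel₀ hN]
  simp only [centered, Pi.add_apply, Pi.smul_apply, smul_eq_mul, Finset.sum_add_distrib,
    ← Finset.mul_sum, hsum]
  simp only [wt, Pi.sub_apply, Pi.single_apply, eq_comm, mul_zero, add_zero, wtPair]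
  ring

lemma Cmat_eq_diagonal : Cmat N = diagonal fun p => wtPair N p.1 p.2 := by
  ext ⟨a, b⟩ ⟨c, d⟩
  simp only [Cmat, E, single_kronecker_single, mul_one, Matrix.sub_apply, Matrix.sum_apply,
    Matrix.smul_apply, single_apply, one_apply, diagonal_apply, wtPair, Prod.mk.injEq]
  by_cases h : a = c ∧ b = d
  · obtain ⟨rfl, rfl⟩ := h
    rcases eq_or_ne a b with rfl | hab
    · simp
    · simp [hab, Finset.filter_eq_empty_iff]
  · simp only [Finset.sum_boole, h, ↓reduceIte, smul_eq_mul, mul_zero, sub_zero, Nat.cast_eq_zero,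
      Finset.card_eq_zero, Finset.filter_eq_empty_iff, Finset.mem_univ, not_and, forall_const]
    rintro _ ⟨rfl, rfl⟩ rfl rfl
    exact h ⟨rfl, rfl⟩

lemma exp_smul_diagonal {n : Type*} [Fintype n] [DecidableEq n] (c : ℂ) (v : n → ℂ) :
    NormedSpace.exp (c • diagonal v) = diagonal fun i => Complex.exp (c * v i) := by
  rw [← diagonal_smul, exp_diagonal]
  congr 1
  ext i
  simp [Complex.exp_eq_exp_ℂ]

lemma Xmat_eq_diagonal (x : Fin N → ℂ) : Xmat N x = diagonal (centered N x) := by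
  ext i j
  rcases eq_or_ne i j with rfl | h
  · simp [Xmat, centered]
  · simp [Xmat, h]

def gaugeIn (γ β u v : ℂ) (x : Fin N → ℂ) (p : Fin N × Fin N) : ℂ :=
  (u + β) * centered N x p.1 + (v - β) * centered N x p.2 + γ * (u - v - β) * wtPair N p.1 p.2

def gaugeOut (γ β u v : ℂ) (x : Fin N → ℂ) (q : Fin N × Fin N) : ℂ :=
  γ * (u - v + β) * wtPair N q.1 q.2 - (u - β) * centered N x q.1 - (v + β) * centered N x q.2

lemma RGauge_eq (γ : ℂ) (α : ℂ → ℂ) (β : ℂ)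
    (R : ℂ → ℂ → (Fin N → ℂ) → Matrix (Fin N × Fin N) (Fin N × Fin N) ℂ)
    (lam mu : ℂ) (x : Fin N → ℂ) :
    RGauge N γ α β R lam mu x =
      diagonal (fun p => Complex.exp (gaugeIn N γ β (α lam) (α mu) x p)) * R lam mu x *
        diagonal (fun q => Complex.exp (gaugeOut N γ β (α lam) (α mu) x q)) := by
  simp only [RGauge, Xmat_eq_diagonal, Cmat_eq_diagonal, exp_smul_diagonal,
    diagonal_kronecker_diagonal, Matrix.mul_assoc, diagonal_mul_diagonal]
  simp only [← Matrix.mul_assoc, ← Complex.exp_add, gaugeIn, gaugeOut]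
  congr 3
  funext p
  ring_nf

def ConservesWeight {n : Type*} (M : Matrix (n × n) (n × n) ℂ) : Prop :=
  ∀ p q, M p q ≠ 0 → q = p ∨ q = p.swap

lemma eq_or_eq_swap_of_forall_add_eq {n : Type*} [DecidableEq n] {p q : n × n}
    (h : ∀ d : n → ℂ, d p.1 + d p.2 = d q.1 + d q.2) : q = p ∨ q = p.swap := by
  have hδ := fun a => h (fun i => if i = a then 1 else 0)
  obtain ⟨a, b⟩ := p
  obtain ⟨c, e⟩ := q
  simp only [Prod.mk.injEq, Prod.swap_prod_mk]
  by_cases hca : c = a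
  · subst hca
    have := hδ e
    by_cases hbe : b = e <;> simp_all
  · have := hδ a
    have := hδ b
    by_cases hea : e = a <;> by_cases hcb : c = b <;> by_cases hba : b = a <;> simp_all

lemma conservesWeight_of_commute {n : Type*} [Fintype n] [DecidableEq n]
    (M : Matrix (n × n) (n × n) ℂ)
    (h : ∀ d : n → ℂ, (diagonal d ⊗ₖ (1 : Matrix n n ℂ) + (1 : Matrix n n ℂ) ⊗ₖ diagonal d) * M =
      M * (diagonal d ⊗ₖ (1 : Matrix n n ℂ) + (1 : Matrix n n ℂ) ⊗ₖ diagonal d)) :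
    ConservesWeight M := by
  intro p q hpq
  refine eq_or_eq_swap_of_forall_add_eq fun d => ?_
  have hd := congr_fun₂ (h d) p q
  simp only [← diagonal_one, diagonal_kronecker_diagonal, diagonal_add, diagonal_mul,
    mul_diagonal, mul_one, one_mul] at hd
  exact mul_right_cancel₀ hpq (by simpa only [mul_comm] using hd)

section Embeddings

variable {N}
variable {S : (Fin N → ℂ) → Matrix (Fin N × Fin N) (Fin N × Fin N) ℂ} {x : Fin N → ℂ} {s : ℂ}

lemma eq_or_eq_of_sh12_apply_ne_zero (hS : ∀ y, ConservesWeight (S y))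
    {p r : Fin N × Fin N × Fin N} (h : sh12 N S x s p r ≠ 0) :
    r = p ∨ r = (p.2.1, p.1, p.2.2) := by
  obtain ⟨a, b, c⟩ := p
  obtain ⟨a', b', c'⟩ := r
  simp only [sh12, ne_eq, ite_eq_right_iff, not_forall] at h
  obtain ⟨rfl, h⟩ := h
  rcases hS _ _ _ h with h' | h' <;> simp_all [Prod.ext_iff]

lemma eq_or_eq_of_sh13_apply_ne_zero (hS : ∀ y, ConservesWeight (S y))
    {p r : Fin N × Fin N × Fin N} (h : sh13 N S x s p r ≠ 0) :
    r = p ∨ r = (p.2.2, p.2.1, p.1) := by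
  obtain ⟨a, b, c⟩ := p
  obtain ⟨a', b', c'⟩ := r
  simp only [sh13, ne_eq, ite_eq_right_iff, not_forall] at h
  obtain ⟨rfl, h⟩ := h
  rcases hS _ _ _ h with h' | h' <;> simp_all [Prod.ext_iff]

lemma eq_or_eq_of_sh23_apply_ne_zero (hS : ∀ y, ConservesWeight (S y))
    {p r : Fin N × Fin N × Fin N} (h : sh23 N S x s p r ≠ 0) :
    r = p ∨ r = (p.1, p.2.2, p.2.1) := by
  obtain ⟨a, b, c⟩ := p
  obtain ⟨a', b', c'⟩ := r
  simp only [sh23, ne_eq, ite_eq_right_iff, not_forall] at h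
  obtain ⟨rfl, h⟩ := h
  rcases hS _ _ _ h with h' | h' <;> simp_all [Prod.ext_iff]

variable {S' : (Fin N → ℂ) → Matrix (Fin N × Fin N) (Fin N × Fin N) ℂ}
  {f g : (Fin N → ℂ) → Fin N × Fin N → ℂ}

lemma sh12_eq_diagonal_mul_mul_diagonal (h : ∀ y, S' y = diagonal (f y) * S y * diagonal (g y)) :
    sh12 N S' x s = diagonal (fun p => f (x + s • wt N p.2.2) (p.1, p.2.1)) * sh12 N S x s *
      diagonal (fun q => g (x + s • wt N q.2.2) (q.1, q.2.1)) := by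
  ext p q
  simp only [sh12, h, diagonal_mul, mul_diagonal]
  split_ifs with hpq <;> simp [hpq]

lemma sh13_eq_diagonal_mul_mul_diagonal (h : ∀ y, S' y = diagonal (f y) * S y * diagonal (g y)) :
    sh13 N S' x s = diagonal (fun p => f (x + s • wt N p.2.1) (p.1, p.2.2)) * sh13 N S x s *
      diagonal (fun q => g (x + s • wt N q.2.1) (q.1, q.2.2)) := by
  ext p q
  simp only [sh13, h, diagonal_mul, mul_diagonal]
  split_ifs with hpq <;> simp [hpq]

lemma sh23_eq_diagonal_mul_mul_diagonal (h : ∀ y, S' y = diagonal (f y) * S y * diagonal (g y)) :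
    sh23 N S' x s = diagonal (fun p => f (x + s • wt N p.1) (p.2.1, p.2.2)) * sh23 N S x s *
      diagonal (fun q => g (x + s • wt N q.1) (q.2.1, q.2.2)) := by
  ext p q
  simp only [sh23, h, diagonal_mul, mul_diagonal]
  split_ifs with hpq <;> simp [hpq]

end Embeddings

lemma diagonal_mul_mul_diagonal {R n : Type*} [CommSemiring R] [Fintype n] [DecidableEq n]
    (M : Matrix n n R) (u v : n → R) :
    diagonal u * M * diagonal v = of fun i j => u i * M i j * v j := by
  ext i j
  simp [diagonal_mul, mul_diagonal]

lemma diagonal_conj_mul_mul {R n : Type*} [CommSemiring R] [Fintype n] [DecidableEq n]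
    (A B C : Matrix n n R) (a₁ a₂ b₁ b₂ c₁ c₂ f g : n → R)
    (h : ∀ p r t q, A p r ≠ 0 → B r t ≠ 0 → C t q ≠ 0 →
      a₁ p * (a₂ r * b₁ r) * (b₂ t * c₁ t) * c₂ q = f p * g q) :
    (diagonal a₁ * A * diagonal a₂) * (diagonal b₁ * B * diagonal b₂) *
        (diagonal c₁ * C * diagonal c₂) = diagonal f * (A * B * C) * diagonal g := by
  simp only [diagonal_mul_mul_diagonal]
  ext p q
  simp only [mul_apply, of_apply, Finset.sum_mul, Finset.mul_sum]
  refine Finset.sum_congr rfl fun t _ => Finset.sum_congr rfl fun r _ => ?_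
  by_cases hA : A p r = 0
  · simp [hA]
  by_cases hB : B r t = 0
  · simp [hB]
  by_cases hC : C t q = 0
  · simp [hC]
  calc _ = a₁ p * (a₂ r * b₁ r) * (b₂ t * c₁ t) * c₂ q * (A p r * B r t * C t q) := by ring
    _ = _ := by rw [h p r t q hA hB hC]; ring

-- Solved for from the eight path conditions on each side of the GNF equation; `gnfIn` and `gnfOut`
-- are unique up to multiples of the conserved quantities `∑ᵢ centered x pᵢ` and
-- `∑_{i<j} wtPair pᵢ pⱼ`.
def gnfIn (γ β a₁ a₂ a₃ : ℂ) (x : Fin N → ℂ) (p : Fin N × Fin N × Fin N) : ℂ :=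
  a₁ * centered N x p.1 + a₂ * centered N x p.2.1 + a₃ * centered N x p.2.2 +
    γ * ((a₁ - a₂) * wtPair N p.1 p.2.1 + (a₁ - a₃) * wtPair N p.1 p.2.2 +
      (a₂ - a₃) * wtPair N p.2.1 p.2.2) +
    2 * β * (centered N x p.1 - centered N x p.2.2 + γ * wtPair N p.1 p.2.2)

def gnfOut (γ β a₁ a₂ a₃ : ℂ) (x : Fin N → ℂ) (q : Fin N × Fin N × Fin N) : ℂ :=
  -(a₁ * centered N x q.1 + a₂ * centered N x q.2.1 + a₃ * centered N x q.2.2) +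
    γ * ((a₁ - a₂) * wtPair N q.1 q.2.1 + (a₁ - a₃) * wtPair N q.1 q.2.2 +
      (a₂ - a₃) * wtPair N q.2.1 q.2.2) +
    2 * β * (centered N x q.1 - centered N x q.2.2 - γ * wtPair N q.1 q.2.2)

section GaugedProducts

variable {N}
variable (γ : ℂ) (α : ℂ → ℂ) (β : ℂ)
  (R : ℂ → ℂ → (Fin N → ℂ) → Matrix (Fin N × Fin N) (Fin N × Fin N) ℂ)
  {lam₁ lam₂ lam₃ : ℂ} (x : Fin N → ℂ)

lemma sh12_sh13_sh23_RGauge (h₁₂ : ∀ y, ConservesWeight (R lam₁ lam₂ y))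
    (h₁₃ : ∀ y, ConservesWeight (R lam₁ lam₃ y)) (h₂₃ : ∀ y, ConservesWeight (R lam₂ lam₃ y)) :
    sh12 N (RGauge N γ α β R lam₁ lam₂) x γ * sh13 N (RGauge N γ α β R lam₁ lam₃) x (-γ) *
        sh23 N (RGauge N γ α β R lam₂ lam₃) x γ =
      diagonal (fun p => Complex.exp (gnfIn N γ β (α lam₁) (α lam₂) (α lam₃) x p)) *
        (sh12 N (R lam₁ lam₂) x γ * sh13 N (R lam₁ lam₃) x (-γ) * sh23 N (R lam₂ lam₃) x γ) *
        diagonal (fun q => Complex.exp (gnfOut N γ β (α lam₁) (α lam₂) (α lam₃) x q)) := by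
  simp only [sh12_eq_diagonal_mul_mul_diagonal (RGauge_eq N γ α β R _ _),
    sh13_eq_diagonal_mul_mul_diagonal (RGauge_eq N γ α β R _ _),
    sh23_eq_diagonal_mul_mul_diagonal (RGauge_eq N γ α β R _ _)]
  refine diagonal_conj_mul_mul _ _ _ _ _ _ _ _ _ _ _ fun p r t q hA hB hC => ?_
  obtain ⟨a, b, c⟩ := p
  rcases eq_or_eq_of_sh12_apply_ne_zero h₁₂ hA with rfl | rfl <;>
  rcases eq_or_eq_of_sh13_apply_ne_zero h₁₃ hB with rfl | rfl <;>
  rcases eq_or_eq_of_sh23_apply_ne_zero h₂₃ hC with rfl | rfl <;>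
  · simp only [← Complex.exp_add, gaugeIn, gaugeOut, gnfIn, gnfOut, centered_add_smul_wt]
    congr 1
    simp only [wtPair_comm]
    ring

lemma sh23_sh13_sh12_RGauge (h₁₂ : ∀ y, ConservesWeight (R lam₁ lam₂ y))
    (h₁₃ : ∀ y, ConservesWeight (R lam₁ lam₃ y)) (h₂₃ : ∀ y, ConservesWeight (R lam₂ lam₃ y)) :
    sh23 N (RGauge N γ α β R lam₂ lam₃) x (-γ) * sh13 N (RGauge N γ α β R lam₁ lam₃) x γ *
        sh12 N (RGauge N γ α β R lam₁ lam₂) x (-γ) =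
      diagonal (fun p => Complex.exp (gnfIn N γ β (α lam₁) (α lam₂) (α lam₃) x p)) *
        (sh23 N (R lam₂ lam₃) x (-γ) * sh13 N (R lam₁ lam₃) x γ * sh12 N (R lam₁ lam₂) x (-γ)) *
        diagonal (fun q => Complex.exp (gnfOut N γ β (α lam₁) (α lam₂) (α lam₃) x q)) := by
  simp only [sh12_eq_diagonal_mul_mul_diagonal (RGauge_eq N γ α β R _ _),
    sh13_eq_diagonal_mul_mul_diagonal (RGauge_eq N γ α β R _ _),
    sh23_eq_diagonal_mul_mul_diagonal (RGauge_eq N γ α β R _ _)]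
  refine diagonal_conj_mul_mul _ _ _ _ _ _ _ _ _ _ _ fun p r t q hA hB hC => ?_
  obtain ⟨a, b, c⟩ := p
  rcases eq_or_eq_of_sh23_apply_ne_zero h₂₃ hA with rfl | rfl <;>
  rcases eq_or_eq_of_sh13_apply_ne_zero h₁₃ hB with rfl | rfl <;>
  rcases eq_or_eq_of_sh12_apply_ne_zero h₁₂ hC with rfl | rfl <;>
  · simp only [← Complex.exp_add, gaugeIn, gaugeOut, gnfIn, gnfOut, centered_add_smul_wt]
    congr 1
    simp only [wtPair_comm]
    ring

end GaugedProducts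

theorem gauge_freedom_GNF (γ : ℂ) (Λ : Set ℂ)
    (R : ℂ → ℂ → (Fin N → ℂ) → Matrix (Fin N × Fin N) (Fin N × Fin N) ℂ)
    (ha : ∀ lam ∈ Λ, ∀ mu ∈ Λ, ∀ x : Fin N → ℂ, ∀ d : Fin N → ℂ,
      (Matrix.diagonal d ⊗ₖ (1 : Matrix (Fin N) (Fin N) ℂ) +
        (1 : Matrix (Fin N) (Fin N) ℂ) ⊗ₖ Matrix.diagonal d) * R lam mu x =
      R lam mu x * (Matrix.diagonal d ⊗ₖ (1 : Matrix (Fin N) (Fin N) ℂ) +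
        (1 : Matrix (Fin N) (Fin N) ℂ) ⊗ₖ Matrix.diagonal d))
    (hb : ∀ lam₁ ∈ Λ, ∀ lam₂ ∈ Λ, ∀ lam₃ ∈ Λ, ∀ x : Fin N → ℂ,
      GNF N γ R lam₁ lam₂ lam₃ x)
    (α : ℂ → ℂ) (β : ℂ) :
    ∀ lam₁ ∈ Λ, ∀ lam₂ ∈ Λ, ∀ lam₃ ∈ Λ, ∀ x : Fin N → ℂ,
      GNF N γ (RGauge N γ α β R) lam₁ lam₂ lam₃ x := by
  intro lam₁ h₁ lam₂ h₂ lam₃ h₃ x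
  have hR : ∀ {lam mu}, lam ∈ Λ → mu ∈ Λ → ∀ y, ConservesWeight (R lam mu y) :=
    fun hl hm y => conservesWeight_of_commute _ (ha _ hl _ hm y)
  rw [GNF, sh12_sh13_sh23_RGauge γ α β R x (hR h₁ h₂) (hR h₁ h₃) (hR h₂ h₃),
    sh23_sh13_sh12_RGauge γ α β R x (hR h₁ h₂) (hR h₁ h₃) (hR h₂ h₃), hb lam₁ h₁ lam₂ h₂ lam₃ h₃ x]
end
end
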